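/- Let (β_n)_{n ≥ 0} in ℚ(q) be the Carlitz q-Bernoulli numbers, i.e., β_0 = 1 and for every n ≥ 1, q · ∑_{i=0}^{n} C(n, i) q^i β_i − β_n equals 1 if n = 1 and equals 0 if n > 1 (this determines β_n uniquely in ℚ(q), since the coefficient q^{n+1} − 1 of β_n is nonzero there). Then for every n ≥ 2, β_n = ∑_{k=0}^{n} (−1)^k · {n+1 brace k+1}_q · [k]!_q / [k+1]_q. -/

import Mathlib

open Finset

/-- The q-integer `[n]_q = 1 + q + ⋯ + q^(n-1)`. -/
def qInt {R : Type*} [CommSemiring R] (q : R) (n : ℕ) : R :=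
  ∑ i ∈ Finset.range n, q ^ i

/-- The q-factorial `[n]!_q = [1]_q [2]_q ⋯ [n]_q`. -/
def qFact {R : Type*} [CommSemiring R] (q : R) (n : ℕ) : R :=
  ∏ i ∈ Finset.range n, qInt q (i + 1)

/-- The Carlitz q-Stirling numbers of the second kind. -/
def qStirling {R : Type*} [CommSemiring R] (q : R) : ℕ → ℕ → R
  | 0, 0 => 1
  | 0, _ + 1 => 0
  | _ + 1, 0 => 0
  | n + 1, m + 1 => qStirling q n m + qInt q (m + 1) * qStirling q n (m + 1)

namespace Carlitz
noncomputable def q : RatFunc ℚ := RatFunc.X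
noncomputable def Iq (n : ℕ) : RatFunc ℚ := qInt q n
noncomputable def St (n m : ℕ) : RatFunc ℚ := qStirling q n m
noncomputable def Fc (n : ℕ) : RatFunc ℚ := qFact q n
lemma Iq_zero : Iq 0 = 0 := by simp [Iq, qInt]
lemma Iq_one : Iq 1 = 1 := by simp [Iq, qInt]
lemma Iq_succ (m : ℕ) : Iq (m + 1) = 1 + q * Iq m := by
  simp only [Iq, qInt, Finset.sum_range_succ', pow_zero, pow_succ]
  rw [← Finset.sum_mul, mul_comm]; ring
lemma Fc_zero : Fc 0 = 1 := by simp [Fc, qFact]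
lemma Fc_succ (m : ℕ) : Fc (m + 1) = Fc m * Iq (m + 1) := Finset.prod_range_succ _ _
lemma St_zero_zero : St 0 0 = 1 := rfl
lemma St_zero (n : ℕ) : St (n + 1) 0 = 0 := rfl
lemma St_zero' (m : ℕ) : St 0 (m + 1) = 0 := rfl
lemma St_succ (n m : ℕ) : St (n + 1) (m + 1) = St n m + Iq (m + 1) * St n (m + 1) := rfl
lemma St_eq_zero : ∀ n m, n < m → St n m = 0
  | 0, 0, h => absurd h (lt_irrefl 0)
  | 0, m + 1, _ => rfl
  | n + 1, 0, h => by omega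
  | n + 1, m + 1, h => by
      rw [St_succ, St_eq_zero n m (by omega), St_eq_zero n (m + 1) (by omega)]; ring
lemma St_one : ∀ n, St (n + 1) 1 = 1
  | 0 => by rw [St_succ, St_zero_zero, St_zero' 0]; ring
  | n + 1 => by rw [St_succ, St_zero, St_one n, Iq_one]; ring
lemma algebraMap_qInt (n : ℕ) :
    (algebraMap (Polynomial ℚ) (RatFunc ℚ)) (qInt Polynomial.X n) = Iq n := by
  simp [qInt, map_sum, map_pow, Iq, q, RatFunc.algebraMap_X]
lemma Iq_ne_zero (k : ℕ) : Iq (k + 1) ≠ 0 := by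
  rw [← algebraMap_qInt]
  rw [map_ne_zero_iff _ (IsFractionRing.injective (Polynomial ℚ) (RatFunc ℚ))]
  intro h
  have h2 := congrArg (Polynomial.eval 1) h
  simp [qInt, Polynomial.eval_finset_sum] at h2
  exact Nat.cast_add_one_ne_zero k h2
lemma q_sub_one_ne_zero : q - 1 ≠ 0 := by
  have : q - 1 = (algebraMap (Polynomial ℚ) (RatFunc ℚ)) (Polynomial.X - 1) := by
    simp [q, RatFunc.algebraMap_X]
  rw [this, map_ne_zero_iff _ (IsFractionRing.injective (Polynomial ℚ) (RatFunc ℚ))]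
  exact Polynomial.X_sub_C_ne_zero 1
lemma pow_sub_one_ne_zero (n : ℕ) : q ^ (n + 1) - 1 ≠ 0 := by
  have h : Iq (n + 1) * (q - 1) = q ^ (n + 1) - 1 := geom_sum_mul q (n + 1)
  rw [← h]
  exact mul_ne_zero (Iq_ne_zero n) q_sub_one_ne_zero

lemma choose_peel (n : ℕ) (f : ℕ → RatFunc ℚ) :
    ∑ i ∈ range (n + 2), ((n + 1).choose i : RatFunc ℚ) * f i
      = ∑ i ∈ range (n + 1), (n.choose i : RatFunc ℚ) * f (i + 1)
        + ∑ i ∈ range (n + 1), (n.choose i : RatFunc ℚ) * f i := by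
  have h1 := Finset.sum_range_succ' (fun i => ((n + 1).choose i : RatFunc ℚ) * f i) (n + 1)
  have h2 := Finset.sum_range_succ' (fun i => ((n).choose i : RatFunc ℚ) * f i) (n + 1)
  have h3 := Finset.sum_range_succ (fun i => ((n).choose i : RatFunc ℚ) * f i) (n + 1)
  simp only [Nat.choose_succ_succ, Nat.cast_add, add_mul, Nat.choose_zero_right, Nat.cast_one,
    Nat.choose_succ_self, Nat.cast_zero, zero_mul] at h1 h2 h3
  rw [h1, Finset.sum_add_distrib]
  linear_combination h3 - h2

lemma keyF (n : ℕ) : ∀ m : ℕ,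
    ∑ i ∈ range (n + 1), (n.choose i : RatFunc ℚ) * (q ^ i * St (i + 1) (m + 1))
      = q ^ m * (St n m + (Iq (m + 2) + q * Iq m) * St n (m + 1)
          + q * Iq (m + 1) * Iq (m + 2) * St n (m + 2)) := by
  induction n with
  | zero =>
    intro m
    rw [Finset.sum_range_one]
    match m with
    | 0 => simp [St_succ, St_zero_zero, St_zero', Iq_one]
    | m + 1 => rw [St_succ]; simp [St_zero', St_eq_zero]
  | succ n ih =>
    intro m
    rw [choose_peel n (fun i => q ^ i * St (i + 1) (m + 1))]
    have hexp : ∀ i ∈ range (n + 1), (n.choose i : RatFunc ℚ) * (q ^ (i + 1) * St (i + 1 + 1) (m + 1))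
        = q * ((n.choose i : RatFunc ℚ) * (q ^ i * St (i + 1) m))
          + q * Iq (m + 1) * ((n.choose i : RatFunc ℚ) * (q ^ i * St (i + 1) (m + 1))) := by
      intro i _; rw [St_succ]; ring
    rw [Finset.sum_congr rfl hexp, Finset.sum_add_distrib, ← Finset.mul_sum, ← Finset.mul_sum,
      ih m]
    match m with
    | 0 =>
      have hz : ∑ i ∈ range (n + 1), (n.choose i : RatFunc ℚ) * (q ^ i * St (i + 1) 0) = 0 := by
        simp [St_zero]
      rw [hz, mul_zero, zero_add]
      simp only [St_succ, St_zero, Iq_succ, Iq_zero]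
      ring
    | k + 1 =>
      rw [ih k]
      simp only [St_succ, Iq_succ, Iq_zero]
      ring

noncomputable def a (k : ℕ) : RatFunc ℚ :=
  (-1) ^ k * Fc k / Iq (k + 1) * (q ^ (k + 1) - 1)
noncomputable def b (k : ℕ) : RatFunc ℚ :=
  (-1) ^ k * Fc k / Iq (k + 1) * (q ^ (k + 1) * (Iq (k + 2) + q * Iq k) - Iq (k + 1))
noncomputable def e (k : ℕ) : RatFunc ℚ :=
  (-1) ^ k * Fc k / Iq (k + 1) * (q ^ (k + 2) * Iq (k + 1) * Iq (k + 2))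
noncomputable def W : ℕ → RatFunc ℚ
  | 0 => a 0
  | 1 => a 1 + b 0
  | (k + 2) => a (k + 2) + b (k + 1) + e k

lemma W_one : W 1 = q ^ 2 := by
  have h2 := Iq_ne_zero 1
  simp only [W, a, b]
  simp only [Fc_succ, Fc_zero, Iq_succ, Iq_zero, mul_zero, add_zero, mul_one] at h2 ⊢
  field_simp
  ring

lemma W_add_two (m : ℕ) : W (m + 2) = (-1) ^ m * q ^ (m + 2) * Fc m := by
  have h1 := Iq_ne_zero m
  have h2 := Iq_ne_zero (m + 1)
  have h3 := Iq_ne_zero (m + 2)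
  have hg : Iq m * (q - 1) = q ^ m - 1 := geom_sum_mul q m
  have hpow : q ^ m = (q - 1) * Iq m + 1 := by linear_combination -hg
  simp only [W, a, b, e]
  simp only [Fc_succ, Iq_succ] at h1 h2 h3 ⊢
  simp only [pow_succ]
  rw [hpow]
  field_simp
  ring

lemma W_tel : ∀ j : ℕ, W (j + 2) + W (j + 1) * (Iq (j + 1) - 1)
    = if j = 0 then q ^ 2 else 0
  | 0 => by
    rw [if_pos rfl, W_add_two, W_one, Iq_one, Fc_zero]
    ring
  | j + 1 => by
    rw [if_neg (Nat.succ_ne_zero j), W_add_two, W_add_two, Fc_succ]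
    simp only [Iq_succ]
    ring

lemma stirlStep (c : ℕ → RatFunc ℚ) (n N : ℕ) (hN : n + 1 ≤ N) :
    ∑ j ∈ range (N + 1), c j * St (n + 1) j
      = ∑ j ∈ range (N + 1), (c (j + 1) + c j * Iq j) * St n j := by
  have hL : ∑ j ∈ range (N + 1), c j * St (n + 1) j
      = ∑ j ∈ range N, (c (j + 1) * St n j + (c (j + 1) * Iq (j + 1)) * St n (j + 1)) := by
    rw [Finset.sum_range_succ' (fun j => c j * St (n + 1) j) N]
    rw [St_zero, mul_zero, add_zero]
    exact Finset.sum_congr rfl fun j _ => by rw [St_succ]; ring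
  have hR : ∑ j ∈ range (N + 1), (c (j + 1) + c j * Iq j) * St n j
      = ∑ j ∈ range (N + 1), c (j + 1) * St n j
        + ∑ j ∈ range (N + 1), (c j * Iq j) * St n j := by
    rw [← Finset.sum_add_distrib]
    exact Finset.sum_congr rfl fun j _ => by ring
  have hR1 : ∑ j ∈ range (N + 1), c (j + 1) * St n j
      = ∑ j ∈ range N, c (j + 1) * St n j := by
    rw [Finset.sum_range_succ, St_eq_zero n N (by omega), mul_zero, add_zero]
  have hR2 : ∑ j ∈ range (N + 1), (c j * Iq j) * St n j
      = ∑ j ∈ range N, (c (j + 1) * Iq (j + 1)) * St n (j + 1) := by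
    rw [Finset.sum_range_succ' (fun j => (c j * Iq j) * St n j) N]
    rw [Iq_zero, mul_zero, zero_mul, add_zero]
  rw [hL, hR, hR1, hR2, Finset.sum_add_distrib]

lemma Wsum (n : ℕ) (hn : 1 ≤ n) : ∑ j ∈ range (n + 3), W j * St n j = n * q ^ 2 := by
  induction n, hn using Nat.le_induction with
  | base =>
    have e2 : St 1 2 = 0 := St_eq_zero 1 2 (by omega)
    have e3 : St 1 3 = 0 := St_eq_zero 1 3 (by omega)
    simp [Finset.sum_range_succ, St_zero, St_one, e2, e3, W_one]
  | succ n hn ih =>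
    rw [show n + 1 + 3 = (n + 3) + 1 from rfl]
    rw [stirlStep W n (n + 3) (by omega)]
    have hsplit : ∀ j ∈ range (n + 3 + 1), (W (j + 1) + W j * Iq j) * St n j
        = W j * St n j + (W (j + 1) + W j * (Iq j - 1)) * St n j := by
      intro j _; ring
    rw [Finset.sum_congr rfl hsplit, Finset.sum_add_distrib]
    have hfirst : ∑ j ∈ range (n + 3 + 1), W j * St n j = n * q ^ 2 := by
      rw [Finset.sum_range_succ, St_eq_zero n (n + 3) (by omega), mul_zero, add_zero, ih]
    have hsecond : ∑ j ∈ range (n + 3 + 1), (W (j + 1) + W j * (Iq j - 1)) * St n j = q ^ 2 := by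
      rw [Finset.sum_range_succ' (fun j => (W (j + 1) + W j * (Iq j - 1)) * St n j) (n + 3)]
      obtain ⟨n', rfl⟩ : ∃ n', n = n' + 1 := ⟨n - 1, by omega⟩
      rw [St_zero, mul_zero, add_zero]
      have hpt : ∀ j ∈ range (n' + 1 + 3), (W (j + 1 + 1) + W (j + 1) * (Iq (j + 1) - 1)) * St (n' + 1) (j + 1)
          = if j = 0 then q ^ 2 else 0 := by
        intro j _
        rw [W_tel j]
        by_cases h : j = 0
        · subst h
          show q ^ 2 * St (n' + 1) 1 = q ^ 2
          rw [St_one]; ring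
        · simp [h]
      rw [Finset.sum_congr rfl hpt, Finset.sum_ite_eq' (range (n' + 1 + 3)) 0 (fun _ => q ^ 2)]
      simp
    rw [hfirst, hsecond]
    push_cast
    ring

noncomputable def gam (n : ℕ) : RatFunc ℚ :=
  ∑ k ∈ range (n + 1), (-1) ^ k * St (n + 1) (k + 1) * Fc k / Iq (k + 1)

lemma gam_zero : gam 0 = 1 := by
  simp [gam, Finset.sum_range_one, St_one, Fc_zero, Iq_one]

lemma key (n : ℕ) (hn : 1 ≤ n) :
    q * (∑ i ∈ range (n + 1), (n.choose i : RatFunc ℚ) * q ^ i * gam i) - gam n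
      = n * q ^ 2 := by
  have hgam_ext : ∀ i ∈ range (n + 1),
      gam i = ∑ k ∈ range (n + 1), (-1) ^ k * St (i + 1) (k + 1) * Fc k / Iq (k + 1) := by
    intro i hi
    rw [gam]
    apply Finset.sum_subset
    · exact Finset.range_subset_range.mpr (by simp at hi; omega)
    · intro k _ hk
      simp only [Finset.mem_range, not_lt] at hk
      rw [St_eq_zero (i + 1) (k + 1) (by omega)]
      ring
  have step1 : q * (∑ i ∈ range (n + 1), (n.choose i : RatFunc ℚ) * q ^ i * gam i)
      = ∑ k ∈ range (n + 1), ∑ i ∈ range (n + 1),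
          q * ((n.choose i : RatFunc ℚ) * q ^ i * ((-1) ^ k * St (i + 1) (k + 1) * Fc k / Iq (k + 1))) := by
    rw [Finset.mul_sum, Finset.sum_comm]
    apply Finset.sum_congr rfl
    intro i hi
    rw [hgam_ext i hi, Finset.mul_sum, Finset.mul_sum]
  have step2 : ∀ k ∈ range (n + 1),
      ∑ i ∈ range (n + 1),
          q * ((n.choose i : RatFunc ℚ) * q ^ i * ((-1) ^ k * St (i + 1) (k + 1) * Fc k / Iq (k + 1)))
        = (-1) ^ k * Fc k / Iq (k + 1) * q *
            (q ^ k * (St n k + (Iq (k + 2) + q * Iq k) * St n (k + 1)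
              + q * Iq (k + 1) * Iq (k + 2) * St n (k + 2))) := by
    intro k _
    rw [← keyF n k, Finset.mul_sum]
    exact Finset.sum_congr rfl fun i _ => by ring
  have hgamn : gam n = ∑ k ∈ range (n + 1),
      (-1) ^ k * (St n k + Iq (k + 1) * St n (k + 1)) * Fc k / Iq (k + 1) := by
    rw [gam]
    exact Finset.sum_congr rfl fun k _ => by rw [St_succ]
  rw [step1, Finset.sum_congr rfl step2, hgamn, ← Finset.sum_sub_distrib]
  have step3 : ∀ k ∈ range (n + 1),
      (-1) ^ k * Fc k / Iq (k + 1) * q *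
            (q ^ k * (St n k + (Iq (k + 2) + q * Iq k) * St n (k + 1)
              + q * Iq (k + 1) * Iq (k + 2) * St n (k + 2)))
          - (-1) ^ k * (St n k + Iq (k + 1) * St n (k + 1)) * Fc k / Iq (k + 1)
        = a k * St n k + b k * St n (k + 1) + e k * St n (k + 2) := by
    intro k _
    simp only [a, b, e]
    ring
  rw [Finset.sum_congr rfl step3]
  -- now reduce to the W-sum
  have ha : ∑ k ∈ range (n + 3), a k * St n k = ∑ k ∈ range (n + 1), a k * St n k := by
    rw [Finset.sum_range_succ, Finset.sum_range_succ, St_eq_zero n (n + 2) (by omega),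
      St_eq_zero n (n + 1) (by omega)]
    ring
  have hb : ∑ k ∈ range (n + 2), b k * St n (k + 1) = ∑ k ∈ range (n + 1), b k * St n (k + 1) := by
    rw [Finset.sum_range_succ, St_eq_zero n (n + 2) (by omega)]
    ring
  have hnorm : ∀ k : ℕ, k + 1 + 1 = k + 2 := fun _ => rfl
  have hW : ∑ j ∈ range (n + 3), W j * St n j
      = ∑ k ∈ range (n + 1), (a k * St n k + b k * St n (k + 1) + e k * St n (k + 2)) := by
    rw [Finset.sum_range_succ' (fun j => W j * St n j) (n + 2),
      Finset.sum_range_succ' (fun j => W (j + 1) * St n (j + 1)) (n + 1)]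
    simp only [hnorm, zero_add]
    have hW2 : ∀ j ∈ range (n + 1), W (j + 2) * St n (j + 2)
        = a (j + 2) * St n (j + 2) + b (j + 1) * St n (j + 2) + e j * St n (j + 2) := by
      intro j _
      simp only [W]
      ring
    have hsplitL : ∑ j ∈ range (n + 1),
        (a (j + 2) * St n (j + 2) + b (j + 1) * St n (j + 2) + e j * St n (j + 2))
        = ∑ j ∈ range (n + 1), a (j + 2) * St n (j + 2)
          + ∑ j ∈ range (n + 1), b (j + 1) * St n (j + 2)
          + ∑ j ∈ range (n + 1), e j * St n (j + 2) := by
      rw [Finset.sum_add_distrib, Finset.sum_add_distrib]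
    have hsplitR : ∑ k ∈ range (n + 1),
        (a k * St n k + b k * St n (k + 1) + e k * St n (k + 2))
        = ∑ k ∈ range (n + 1), a k * St n k
          + ∑ k ∈ range (n + 1), b k * St n (k + 1)
          + ∑ k ∈ range (n + 1), e k * St n (k + 2) := by
      rw [Finset.sum_add_distrib, Finset.sum_add_distrib]
    have hA : ∑ k ∈ range (n + 3), a k * St n k
        = ∑ j ∈ range (n + 1), a (j + 2) * St n (j + 2) + a 1 * St n 1 + a 0 * St n 0 := by
      rw [Finset.sum_range_succ' (fun j => a j * St n j) (n + 2),
        Finset.sum_range_succ' (fun j => a (j + 1) * St n (j + 1)) (n + 1)]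
    have hB : ∑ k ∈ range (n + 2), b k * St n (k + 1)
        = ∑ j ∈ range (n + 1), b (j + 1) * St n (j + 2) + b 0 * St n 1 := by
      rw [Finset.sum_range_succ' (fun j => b j * St n (j + 1)) (n + 1)]
    rw [Finset.sum_congr rfl hW2, hsplitL, hsplitR]
    rw [show W (0 + 1) = a 1 + b 0 from rfl, show W 0 = a 0 from rfl,
      show St n (0 + 1) = St n 1 from rfl]
    linear_combination ha - hA + hb - hB
  rw [← hW, Wsum n hn]
lemma Iq_two : Iq 2 = 1 + q := by
  simp only [Iq_succ, Iq_zero, mul_zero, add_zero, mul_one]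

lemma one_add_q_ne_zero : (1 : RatFunc ℚ) + q ≠ 0 := by
  have h := Iq_ne_zero 1
  rwa [Iq_two] at h

lemma gam_one : gam 1 = q / (1 + q) := by
  rw [gam, Finset.sum_range_succ, Finset.sum_range_one]
  have h21 : St 2 1 = 1 := St_one 1
  have h22 : St 2 2 = 1 := by
    rw [St_succ, St_one 0, St_eq_zero 1 2 (by omega)]; ring
  rw [h21, h22, Fc_succ, Fc_zero, Iq_two, Iq_one]
  field_simp [one_add_q_ne_zero]
  ring

end Carlitz

open Carlitz

/-- Zeng's formula for the Carlitz q-Bernoulli numbers: if `β₀ = 1` and for all `n ≥ 1`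
`q (qβ + 1)^n - β_n` equals `1` for `n = 1` and `0` for `n > 1` (written out via the
binomial expansion), then for all `n ≥ 2`,
`β_n = ∑_{k=0}^n (-1)^k {n+1 brace k+1}_q [k]!_q / [k+1]_q`. -/
theorem carlitz_qBernoulli_formula (β : ℕ → RatFunc ℚ) (h0 : β 0 = 1)
    (hrec : ∀ n : ℕ, 1 ≤ n →
      RatFunc.X * (∑ i ∈ Finset.range (n + 1),
          (n.choose i : RatFunc ℚ) * (RatFunc.X : RatFunc ℚ) ^ i * β i) - β n
        = if n = 1 then 1 else 0) :
    ∀ n : ℕ, 2 ≤ n →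
      β n = ∑ k ∈ Finset.range (n + 1),
        (-1 : RatFunc ℚ) ^ k * qStirling (RatFunc.X : RatFunc ℚ) (n + 1) (k + 1) *
          qFact (RatFunc.X : RatFunc ℚ) k / qInt (RatFunc.X : RatFunc ℚ) (k + 1) := by
  have hXq : (RatFunc.X : RatFunc ℚ) = q := rfl
  have main : ∀ n : ℕ, β n = if n = 1 then gam 1 - 1 else gam n := by
    intro n
    induction n using Nat.strong_induction_on with
    | _ n ih =>
      rcases n with _ | n
      · rw [if_neg (by omega), h0, gam_zero]
      rcases n with _ | m
      · -- n = 1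
        rw [if_pos rfl]
        have hr := hrec 1 le_rfl
        rw [if_pos rfl, Finset.sum_range_succ, Finset.sum_range_one, h0] at hr
        simp only [hXq, Nat.choose_self, Nat.choose_zero_right, Nat.cast_one, pow_zero,
          pow_one, one_mul, mul_one] at hr
        have hb1 : (q * q - 1) * β 1 = 1 - q := by linear_combination hr
        have hne : q * q - 1 ≠ 0 := by
          have h := pow_sub_one_ne_zero 1
          rwa [pow_succ, pow_one] at h
        apply mul_left_cancel₀ hne
        rw [hb1, gam_one]
        field_simp [one_add_q_ne_zero]
        ring
      · -- n = m + 2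
        rw [if_neg (by omega)]
        have hr := hrec (m + 2) (by omega)
        rw [if_neg (by omega), Finset.sum_range_succ] at hr
        simp only [hXq] at hr
        have hsum : ∑ i ∈ Finset.range (m + 2), ((m + 2).choose i : RatFunc ℚ) * q ^ i * β i
            = ∑ i ∈ Finset.range (m + 2), ((m + 2).choose i : RatFunc ℚ) * q ^ i * gam i
              - ((m + 2 : ℕ) : RatFunc ℚ) * q := by
          have hpt : ∀ i ∈ Finset.range (m + 2),
              ((m + 2).choose i : RatFunc ℚ) * q ^ i * β i
                = ((m + 2).choose i : RatFunc ℚ) * q ^ i * gam i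
                  - (if i = 1 then ((m + 2 : ℕ) : RatFunc ℚ) * q else 0) := by
            intro i hi
            rw [ih i (Finset.mem_range.mp hi)]
            by_cases h1 : i = 1
            · subst h1
              rw [if_pos rfl, if_pos rfl, Nat.choose_one_right]
              ring
            · rw [if_neg h1, if_neg h1, sub_zero]
          rw [Finset.sum_congr rfl hpt, Finset.sum_sub_distrib]
          congr 1
          rw [Finset.sum_ite_eq' (Finset.range (m + 2)) 1 (fun _ => ((m + 2 : ℕ) : RatFunc ℚ) * q)]
          simp
        rw [hsum] at hr
        have hK := key (m + 2) (by omega)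
        rw [Finset.sum_range_succ] at hK
        have hfin : (q ^ (m + 3) - 1) * β (m + 2) = (q ^ (m + 3) - 1) * gam (m + 2) := by
          simp only [Nat.choose_self, Nat.cast_one, one_mul] at hr hK
          linear_combination hr - hK
        exact mul_left_cancel₀ (pow_sub_one_ne_zero (m + 2)) hfin
  intro n hn
  rw [main n, if_neg (by omega)]
  rfl
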